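/- arXiv:1303.2611 — 2 statements merged into one kernel-verified Lean document; each statement's English description precedes it below -/
import Mathlib

section
/- For ε > 0 and x ∈ ℝ, the function f(x) = |x| log(1 + x²/ε²) satisfies |f'(x)| ≤ 4 log(1 + x²/ε²) and |f''(x)| ≤ C/(ε + |x|) for x ≠ 0, with C a universal constant independent of ε. -/
/-!
Write `L(y) = log (1 + y²/ε²)`, so `L'(y) = 2y/(ε² + y²)`. Near `x ≠ 0` the function `|y|` agrees
with `sign x · y`, hence `f' = sign x · (L + 2y²/(ε² + y²))` and
`f'' = sign x · (2y/(ε² + y²) + 4yε²/(ε² + y²)²)`. The bound on `f'` follows from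
`log (1 + t) ≥ t/(1 + t)`, and each term of `f''` is at most `4/(ε + |x|)` by AM-GM, so `C = 8`.
-/

open Filter Topology Real

section

variable {ε : ℝ}

theorem hasDerivAt_log_one_add_sq_div_sq (hε : ε ≠ 0) (x : ℝ) :
    HasDerivAt (fun y => log (1 + y ^ 2 / ε ^ 2)) (2 * x / (ε ^ 2 + x ^ 2)) x := by
  have hsq : HasDerivAt (fun y => 1 + y ^ 2 / ε ^ 2) (2 * x / ε ^ 2) x := by
    simpa using ((hasDerivAt_pow 2 x).div_const (ε ^ 2)).const_add 1
  convert hsq.log (by positivity) using 1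
  field_simp

theorem hasDerivAt_abs_mul_log_one_add_sq_div_sq (hε : ε ≠ 0) {x : ℝ} (hx : x ≠ 0) :
    HasDerivAt (fun y => |y| * log (1 + y ^ 2 / ε ^ 2))
      (SignType.sign x * (log (1 + x ^ 2 / ε ^ 2) + 2 * x ^ 2 / (ε ^ 2 + x ^ 2))) x := by
  refine ((hasDerivAt_abs hx).mul (hasDerivAt_log_one_add_sq_div_sq hε x)).congr_deriv ?_
  rw [← sign_mul_self]
  ring

theorem deriv_abs_mul_log_one_add_sq_div_sq_eventuallyEq (hε : ε ≠ 0) {x : ℝ} (hx : x ≠ 0) :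
    deriv (fun y => |y| * log (1 + y ^ 2 / ε ^ 2)) =ᶠ[𝓝 x]
      fun y => SignType.sign x * (log (1 + y ^ 2 / ε ^ 2) + 2 * y ^ 2 / (ε ^ 2 + y ^ 2)) := by
  have hsign : ∀ᶠ y in 𝓝 x, SignType.sign y = SignType.sign x :=
    (continuousAt_sign_of_ne_zero hx).eventually_mem ((isOpen_discrete {_}).mem_nhds rfl)
  filter_upwards [hsign, eventually_ne_nhds hx] with y hy hy0
  rw [(hasDerivAt_abs_mul_log_one_add_sq_div_sq hε hy0).deriv, hy]

theorem hasDerivAt_log_one_add_sq_div_sq_add_two_mul_sq_div (hε : ε ≠ 0) (x : ℝ) :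
    HasDerivAt (fun y => log (1 + y ^ 2 / ε ^ 2) + 2 * y ^ 2 / (ε ^ 2 + y ^ 2))
      (2 * x / (ε ^ 2 + x ^ 2) + 4 * x * ε ^ 2 / (ε ^ 2 + x ^ 2) ^ 2) x := by
  have hden : ε ^ 2 + x ^ 2 ≠ 0 := by positivity
  have hsq : HasDerivAt (fun y => ε ^ 2 + y ^ 2) (2 * x) x := by
    simpa using (hasDerivAt_pow 2 x).const_add (ε ^ 2)
  have hquot := ((hasDerivAt_pow 2 x).const_mul 2).div hsq hden
  refine ((hasDerivAt_log_one_add_sq_div_sq hε x).add hquot).congr_deriv ?_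
  field_simp
  ring

theorem sq_div_sq_add_sq_le_log_one_add_sq_div_sq (hε : ε ≠ 0) (x : ℝ) :
    x ^ 2 / (ε ^ 2 + x ^ 2) ≤ log (1 + x ^ 2 / ε ^ 2) := by
  convert one_sub_inv_le_log_of_pos (by positivity : 0 < 1 + x ^ 2 / ε ^ 2) using 1
  field_simp
  ring

end

section

variable {ε a : ℝ}

theorem two_mul_div_sq_add_sq_le (hε : 0 < ε) (ha : 0 ≤ a) :
    2 * a / (ε ^ 2 + a ^ 2) ≤ 4 / (ε + a) := by
  rw [div_le_div_iff₀ (by positivity) (by positivity)]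
  nlinarith [sq_nonneg (ε - a)]

theorem four_mul_mul_sq_div_sq_add_sq_sq_le (hε : 0 < ε) (ha : 0 ≤ a) :
    4 * a * ε ^ 2 / (ε ^ 2 + a ^ 2) ^ 2 ≤ 4 / (ε + a) := by
  rw [div_le_div_iff₀ (by positivity) (by positivity)]
  have h1 : (ε + a) * ε ≤ 2 * (ε ^ 2 + a ^ 2) := by nlinarith [sq_nonneg (ε - a)]
  have h2 : 2 * (a * ε) ≤ ε ^ 2 + a ^ 2 := by nlinarith [sq_nonneg (ε - a)]
  have := mul_le_mul h1 h2 (by positivity) (by positivity)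
  nlinarith

end

/-- `f(x) = |x| log(1 + x²/ε²)` satisfies `|f'(x)| ≤ 4 log(1 + x²/ε²)` and
`|f''(x)| ≤ C/(ε + |x|)` for `x ≠ 0`, with `C` a universal constant independent of `ε`. -/
theorem abs_log_functional_derivative_bounds :
    ∃ C : ℝ, 0 < C ∧
      ∀ ε : ℝ, 0 < ε →
        ∀ x : ℝ, x ≠ 0 →
          |deriv (fun y : ℝ => |y| * Real.log (1 + y ^ 2 / ε ^ 2)) x| ≤
            4 * Real.log (1 + x ^ 2 / ε ^ 2) ∧
          |deriv (deriv (fun y : ℝ => |y| * Real.log (1 + y ^ 2 / ε ^ 2))) x| ≤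
            C / (ε + |x|) := by
  refine ⟨8, by norm_num, fun ε hε x hx => ?_⟩
  have hε0 : ε ≠ 0 := hε.ne'
  have hsign : |(SignType.sign x : ℝ)| = 1 := by
    rcases hx.lt_or_gt with h | h <;> simp [h]
  rw [(hasDerivAt_abs_mul_log_one_add_sq_div_sq hε0 hx).deriv,
    (deriv_abs_mul_log_one_add_sq_div_sq_eventuallyEq hε0 hx).deriv_eq,
    ((hasDerivAt_log_one_add_sq_div_sq_add_two_mul_sq_div hε0 x).const_mul _).deriv,
    abs_mul, abs_mul, hsign, one_mul, one_mul]
  constructor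
  · have hlog : 0 ≤ log (1 + x ^ 2 / ε ^ 2) := log_nonneg (le_add_of_nonneg_right (by positivity))
    have hquot := sq_div_sq_add_sq_le_log_one_add_sq_div_sq hε0 x
    rw [abs_of_nonneg (by positivity)]
    linarith [mul_div_assoc 2 (x ^ 2) (ε ^ 2 + x ^ 2)]
  · calc _ ≤ 2 * |x| / (ε ^ 2 + |x| ^ 2) + 4 * |x| * ε ^ 2 / (ε ^ 2 + |x| ^ 2) ^ 2 := by
          refine (abs_add_le _ _).trans_eq ?_
          have hden : 0 < ε ^ 2 + x ^ 2 := by positivity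
          simp [abs_div, abs_mul, abs_of_pos hden, sq_abs]
      _ ≤ 4 / (ε + |x|) + 4 / (ε + |x|) :=
          add_le_add (two_mul_div_sq_add_sq_le hε (abs_nonneg x))
            (four_mul_mul_sq_div_sq_add_sq_sq_le hε (abs_nonneg x))
      _ = 8 / (ε + |x|) := by ring
end

section
/- Let (Z_n)_{n,m} be a family of nonnegative random variables and suppose there exist constants C and functions η(n,m) → 0 (as n,m → ∞) and η̃(ε) → 0 (as ε → 0) such that for all 0 < ε ≤ 1, E[log(1 + Z_{nm}²/ε²)] ≤ C(1 + |log ε| η̃(ε)) + C η(n,m)/ε², and suppose sup_{n,m} E[Z_{nm}^{p+1}] < ∞ for some p > 1. Then E[Z_{nm}^p] → 0 as n, m → ∞. -/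
/-!
Split `E[Z^p]` at the levels `√ε ≤ L`: below `√ε` the contribution is at most `ε^{p/2}`, above `L`
it is at most `E[Z^{p+1}]/L`, and in between it is at most `L^p P(Z ≥ √ε)`. The log functional
controls this probability by Markov's inequality, `P(Z ≥ √ε) ≤ E log(1 + Z²/ε²) / log(1 + 1/ε)`,
and `|log ε| ≤ log(1 + 1/ε)` absorbs the `|log ε| η̃(ε)` term. Hence for fixed `L` and `ε` the
bound is `ε^{p/2} + L^p · o_{ε→0}(1) + B/L + O_{ε,L}(η(n,m))`; choosing `L` large, then `ε` small,
then `n, m` large makes it arbitrarily small.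
-/

open MeasureTheory Filter Set Topology

lemma rpow_le_one_add_rpow {x q r : ℝ} (hx : 0 ≤ x) (hq : 0 ≤ q) (hqr : q ≤ r) :
    x ^ q ≤ 1 + x ^ r := by
  rcases le_total x 1 with h | h
  · linarith [Real.rpow_le_one hx h hq, Real.rpow_nonneg hx r]
  · linarith [Real.rpow_le_rpow_of_exponent_le h hqr]

lemma rpow_le_rpow_add_ite_add_div {x s L p : ℝ} (hx : 0 ≤ x) (hs : 0 ≤ s) (hL : 0 < L)
    (hp : 0 ≤ p) : x ^ p ≤ s ^ p + (if s ≤ x then L ^ p else 0) + x ^ (p + 1) / L := by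
  have hsp : 0 ≤ s ^ p := Real.rpow_nonneg hs p
  have htail : 0 ≤ x ^ (p + 1) / L := by positivity
  by_cases hsx : s ≤ x
  · rw [if_pos hsx]
    rcases le_total x L with hxL | hLx
    · linarith [Real.rpow_le_rpow hx hxL hp]
    · have hx0 : 0 < x := hL.trans_le hLx
      have : x ^ p * L ≤ x ^ (p + 1) := by
        rw [Real.rpow_add hx0, Real.rpow_one]
        exact mul_le_mul_of_nonneg_left hLx (Real.rpow_nonneg hx p)
      rw [← le_div_iff₀ hL] at this
      linarith [Real.rpow_nonneg hL.le p]
  · rw [if_neg hsx]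
    linarith [Real.rpow_le_rpow hx (not_le.1 hsx).le hp]

lemma Real.abs_log_le_log_one_add_inv {ε : ℝ} (hε : 0 < ε) (hε1 : ε ≤ 1) :
    |Real.log ε| ≤ Real.log (1 + ε⁻¹) := by
  rw [abs_of_nonpos (Real.log_nonpos hε.le hε1), ← Real.log_inv]
  exact Real.log_le_log (by positivity) (by linarith)

lemma Real.log_one_add_inv_pos {ε : ℝ} (hε : 0 < ε) : 0 < Real.log (1 + ε⁻¹) :=
  Real.log_pos (lt_add_of_pos_right 1 (inv_pos.2 hε))

lemma tendsto_rpow_nhdsGT_zero {r : ℝ} (hr : 0 < r) :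
    Tendsto (fun ε : ℝ => ε ^ r) (𝓝[>] 0) (𝓝 0) := by
  simpa [Real.zero_rpow hr.ne'] using
    (Real.continuousAt_rpow_const 0 r (Or.inr hr.le)).tendsto.mono_left nhdsWithin_le_nhds

lemma tendsto_log_one_add_inv_nhdsGT_zero :
    Tendsto (fun ε : ℝ => Real.log (1 + ε⁻¹)) (𝓝[>] 0) atTop :=
  Real.tendsto_log_atTop.comp (tendsto_atTop_add_const_left _ 1 tendsto_inv_nhdsGT_zero)

lemma tendsto_one_add_abs_log_mul_div_log_one_add_inv {g : ℝ → ℝ}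
    (hg : Tendsto g (𝓝[>] 0) (𝓝 0)) :
    Tendsto (fun ε => (1 + |Real.log ε| * g ε) / Real.log (1 + ε⁻¹)) (𝓝[>] 0) (𝓝 0) := by
  have hratio : IsBoundedUnder (· ≤ ·) (𝓝[>] (0 : ℝ))
      (fun ε => ‖|Real.log ε| / Real.log (1 + ε⁻¹)‖) := by
    refine isBoundedUnder_of_eventually_le (a := 1) ?_
    filter_upwards [Ioo_mem_nhdsGT (zero_lt_one' ℝ)] with ε ⟨hε, hε1⟩
    have hlog := Real.log_one_add_inv_pos hε
    rw [Real.norm_of_nonneg (div_nonneg (abs_nonneg _) hlog.le), div_le_one hlog]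
    exact Real.abs_log_le_log_one_add_inv hε hε1.le
  have hsplit := (tendsto_const_nhds (x := (1 : ℝ))).div_atTop
    tendsto_log_one_add_inv_nhdsGT_zero |>.add (hg.zero_mul_isBoundedUnder_le hratio)
  rw [add_zero] at hsplit
  refine hsplit.congr fun ε => ?_
  ring

section Moments

variable {Ω : Type*} [MeasurableSpace Ω] {μ : Measure Ω} {f : Ω → ℝ}

lemma integrable_rpow_of_le [IsFiniteMeasure μ] (hf : Measurable f) (hf0 : 0 ≤ f) {q r : ℝ}
    (hq : 0 ≤ q) (hqr : q ≤ r) (hr : Integrable (fun ω => f ω ^ r) μ) :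
    Integrable (fun ω => f ω ^ q) μ :=
  ((integrable_const 1).add hr).mono' (hf.pow_const q).aestronglyMeasurable <|
    ae_of_all _ fun ω => by
      rw [Real.norm_of_nonneg (Real.rpow_nonneg (hf0 ω) q)]
      exact rpow_le_one_add_rpow (hf0 ω) hq hqr

lemma integrable_log_one_add_sq_div (hf : Measurable f) (hf2 : Integrable (fun ω => f ω ^ 2) μ)
    (ε : ℝ) : Integrable (fun ω => Real.log (1 + f ω ^ 2 / ε ^ 2)) μ :=
  (hf2.div_const (ε ^ 2)).mono'
    (((hf.pow_const 2).div_const _).const_add 1).log.aestronglyMeasurable <|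
    ae_of_all _ fun ω => by
      have hpos : 0 < 1 + f ω ^ 2 / ε ^ 2 := by positivity
      rw [Real.norm_of_nonneg (Real.log_nonneg (le_add_of_nonneg_right (by positivity)))]
      linarith [Real.log_le_sub_one_of_pos hpos]

lemma log_mul_measureReal_le_integral_log [IsFiniteMeasure μ] (hf : Measurable f)
    (hf2 : Integrable (fun ω => f ω ^ 2) μ) {s : ℝ} (hs : 0 ≤ s) (ε : ℝ) :
    Real.log (1 + s ^ 2 / ε ^ 2) * μ.real {ω | s ≤ f ω} ≤
      ∫ ω, Real.log (1 + f ω ^ 2 / ε ^ 2) ∂μ := by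
  have hsub : {ω | s ≤ f ω} ⊆
      {ω | Real.log (1 + s ^ 2 / ε ^ 2) ≤ Real.log (1 + f ω ^ 2 / ε ^ 2)} := fun ω hω => by
    have : s ^ 2 ≤ f ω ^ 2 := pow_le_pow_left₀ hs hω 2
    exact Real.log_le_log (by positivity) (by gcongr)
  refine le_trans ?_ (mul_meas_ge_le_integral_of_nonneg (ae_of_all _ fun ω => ?_)
    (integrable_log_one_add_sq_div hf hf2 ε) (Real.log (1 + s ^ 2 / ε ^ 2)))
  · exact mul_le_mul_of_nonneg_left (measureReal_mono hsub)
      (Real.log_nonneg (le_add_of_nonneg_right (by positivity)))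
  · exact Real.log_nonneg (le_add_of_nonneg_right (by positivity))

variable [IsProbabilityMeasure μ]

lemma integral_rpow_le_add_measureReal_add_div (hf : Measurable f) (hf0 : 0 ≤ f) {p s L : ℝ} (hp : 0 ≤ p)
    (hs : 0 ≤ s) (hL : 0 < L) (hint : Integrable (fun ω => f ω ^ (p + 1)) μ) :
    ∫ ω, f ω ^ p ∂μ ≤ s ^ p + L ^ p * μ.real {ω | s ≤ f ω} + (∫ ω, f ω ^ (p + 1) ∂μ) / L := by
  have hA : MeasurableSet {ω | s ≤ f ω} := measurableSet_le measurable_const hf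
  have hind : Integrable ({ω | s ≤ f ω}.indicator fun _ => L ^ p) μ :=
    (integrable_const _).indicator hA
  calc ∫ ω, f ω ^ p ∂μ
      ≤ ∫ ω, (s ^ p + {ω | s ≤ f ω}.indicator (fun _ => L ^ p) ω + f ω ^ (p + 1) / L) ∂μ :=
        integral_mono (integrable_rpow_of_le hf hf0 hp (by linarith) hint)
          (((integrable_const _).add hind).add (hint.div_const L)) fun ω =>
            rpow_le_rpow_add_ite_add_div (hf0 ω) hs hL hp
    _ = s ^ p + L ^ p * μ.real {ω | s ≤ f ω} + (∫ ω, f ω ^ (p + 1) ∂μ) / L := by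
        rw [integral_add (f := fun ω => s ^ p + {ω | s ≤ f ω}.indicator (fun _ => L ^ p) ω)
            ((integrable_const _).add hind) (hint.div_const L),
          integral_add (integrable_const _) hind, integral_const, integral_indicator_const _ hA,
          integral_div]
        simp [mul_comm]

lemma integral_rpow_le_of_log_functional (hf : Measurable f) (hf0 : 0 ≤ f) {p ε L : ℝ}
    (hp : 1 ≤ p) (hε : 0 < ε) (hL : 0 < L) (hint : Integrable (fun ω => f ω ^ (p + 1)) μ) :
    ∫ ω, f ω ^ p ∂μ ≤ ε ^ (p / 2) +
      L ^ p * ((∫ ω, Real.log (1 + f ω ^ 2 / ε ^ 2) ∂μ) / Real.log (1 + ε⁻¹)) +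
        (∫ ω, f ω ^ (p + 1) ∂μ) / L := by
  have hf2 : Integrable (fun ω => f ω ^ 2) μ := by
    simpa only [Real.rpow_two] using integrable_rpow_of_le hf hf0 zero_le_two (by linarith) hint
  have hsqrt : Real.sqrt ε ^ 2 / ε ^ 2 = ε⁻¹ := by
    rw [Real.sq_sqrt hε.le]
    field_simp
  have hmarkov := log_mul_measureReal_le_integral_log hf hf2 (Real.sqrt_nonneg ε) ε
  rw [hsqrt, ← le_div_iff₀' (Real.log_one_add_inv_pos hε)] at hmarkov
  have hsplit := integral_rpow_le_add_measureReal_add_div hf hf0 (by linarith) (Real.sqrt_nonneg ε) hL hint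
  have hsqrt_rpow : Real.sqrt ε ^ p = ε ^ (p / 2) := by
    rw [Real.sqrt_eq_rpow, ← Real.rpow_mul hε.le, one_div_mul_eq_div]
  rw [hsqrt_rpow] at hsplit
  linarith [mul_le_mul_of_nonneg_left hmarkov (Real.rpow_nonneg hL.le p)]

end Moments

lemma tendsto_zero_of_forall_le_add {ι : Type*} {l : Filter ι} {u : ι → ℝ} (hu : ∀ i, 0 ≤ u i)
    (h : ∀ δ > 0, ∃ c < δ, ∃ v : ι → ℝ, Tendsto v l (𝓝 0) ∧ ∀ i, u i ≤ c + v i) :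
    Tendsto u l (𝓝 0) := by
  refine tendsto_order.2 ⟨fun a ha => Eventually.of_forall fun i => ha.trans_le (hu i),
    fun δ hδ => ?_⟩
  obtain ⟨c, hc, v, hv, hle⟩ := h δ hδ
  filter_upwards [hv.eventually (gt_mem_nhds (sub_pos.2 hc))] with i hi
  linarith [hle i]

/-- abstract Cauchy estimate. If nonnegative random variables `Z_{nm}` satisfy
`E[log(1 + Z²/ε²)] ≤ C(1 + |log ε| η̃(ε)) + C η(n,m)/ε²` with `η(n,m) → 0`, `η̃(ε) → 0`, and a
uniform `(p+1)`-moment bound, then `E[Z_{nm}^p] → 0` as `n, m → ∞`. -/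
theorem cauchy_from_log_functional
    {Ω : Type*} [MeasurableSpace Ω] (μ : Measure Ω) [IsProbabilityMeasure μ]
    (Z : ℕ → ℕ → Ω → ℝ) (hZmeas : ∀ n m, Measurable (Z n m))
    (hZpos : ∀ n m ω, 0 ≤ Z n m ω)
    (p : ℝ) (hp : 1 < p) (C : ℝ)
    (η : ℕ → ℕ → ℝ) (ηt : ℝ → ℝ)
    (hη : Tendsto (fun nm : ℕ × ℕ => η nm.1 nm.2) atTop (nhds 0))
    (hηt : Tendsto ηt (nhdsWithin 0 (Set.Ioi 0)) (nhds 0))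
    (hlog : ∀ ε ∈ Set.Ioc (0:ℝ) 1, ∀ n m : ℕ,
      ∫ ω, Real.log (1 + (Z n m ω) ^ 2 / ε ^ 2) ∂μ ≤
        C * (1 + |Real.log ε| * ηt ε) + C * η n m / ε ^ 2)
    (hint : ∀ n m, Integrable (fun ω => (Z n m ω) ^ (p + 1)) μ)
    (hmom : ∃ B : ℝ, ∀ n m : ℕ, ∫ ω, (Z n m ω) ^ (p + 1) ∂μ ≤ B) :
    Tendsto (fun nm : ℕ × ℕ => ∫ ω, (Z nm.1 nm.2 ω) ^ p ∂μ) atTop (nhds 0) := by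
  obtain ⟨B, hB⟩ := hmom
  set a : ℝ → ℝ := fun ε => C * ((1 + |Real.log ε| * ηt ε) / Real.log (1 + ε⁻¹)) with ha_def
  have ha : Tendsto a (𝓝[>] 0) (𝓝 0) := by
    simpa using (tendsto_one_add_abs_log_mul_div_log_one_add_inv hηt).const_mul C
  have hbound : ∀ ε ∈ Ioc (0 : ℝ) 1, ∀ L > 0, ∀ nm : ℕ × ℕ, ∫ ω, Z nm.1 nm.2 ω ^ p ∂μ ≤
      ε ^ (p / 2) + L ^ p * a ε + B / L +
        L ^ p * C / (ε ^ 2 * Real.log (1 + ε⁻¹)) * η nm.1 nm.2 := by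
    rintro ε hε L hL nm
    have := Real.log_one_add_inv_pos hε.1
    calc ∫ ω, Z nm.1 nm.2 ω ^ p ∂μ
        ≤ ε ^ (p / 2) + L ^ p * ((∫ ω, Real.log (1 + Z nm.1 nm.2 ω ^ 2 / ε ^ 2) ∂μ) /
            Real.log (1 + ε⁻¹)) + (∫ ω, Z nm.1 nm.2 ω ^ (p + 1) ∂μ) / L :=
          integral_rpow_le_of_log_functional (hZmeas _ _) (hZpos _ _) hp.le hε.1 hL (hint _ _)
      _ ≤ ε ^ (p / 2) + L ^ p * ((C * (1 + |Real.log ε| * ηt ε) + C * η nm.1 nm.2 / ε ^ 2) /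
            Real.log (1 + ε⁻¹)) + B / L := by
          gcongr
          exacts [hlog ε hε _ _, hB _ _]
      _ = _ := by
          rw [ha_def]
          ring
  refine tendsto_zero_of_forall_le_add
    (fun nm => integral_nonneg fun ω => Real.rpow_nonneg (hZpos _ _ ω) p) fun δ hδ => ?_
  obtain ⟨L, hBL, hL⟩ : ∃ L, B / L < δ / 3 ∧ 0 < L :=
    ((tendsto_const_nhds.div_atTop tendsto_id).eventually (gt_mem_nhds (by positivity))
      |>.and (eventually_gt_atTop 0)).exists
  obtain ⟨ε, hε, hεp, hεa⟩ :
      ∃ ε ∈ Ioc (0 : ℝ) 1, ε ^ (p / 2) < δ / 3 ∧ L ^ p * a ε < δ / 3 :=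
    (Eventually.and (p := (· ∈ Ioc (0 : ℝ) 1)) (Ioc_mem_nhdsGT zero_lt_one) <|
      ((tendsto_rpow_nhdsGT_zero (by linarith)).eventually (gt_mem_nhds (by positivity))).and <|
        (ha.const_mul (L ^ p)).eventually (gt_mem_nhds (by rw [mul_zero]; positivity))).exists
  exact ⟨_, by linarith, _, by simpa using hη.const_mul _, hbound ε hε L hL⟩
end
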